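/- arXiv:2110.00268 — 4 statements merged into one kernel-verified Lean document; each statement's English description precedes it below -/
import Mathlib

section
/- The functor a_1 from torsion R-modules to A is right adjoint to the evaluation functor (V,T,q) ↦ T: for every object X = (V,T,q) of A and every torsion R-module T′ there is a natural isomorphism Hom_A(X, a_1(T′)) ≅ Hom_R(T, T′). Consequently, if I is a torsion R-module that is injective as an R-module, then a_1(I) is an injective object of A. -/
open CategoryTheory Polynomial TensorProduct

noncomputable section

variable (k : Type) [Field k]

/-- `t = k[c, c⁻¹]`, the localization of `R = k[c]` inverting the variable. -/
abbrev LocX : Type := Localization.Away (Polynomial.X : Polynomial k)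

/-- An object of the semifree torsion category `A`: a `k`-vector space `V`, a torsion
`k[c]`-module `T`, and a `k[c]`-linear map `q : t ⊗_k V → T`. -/
structure SObj : Type 1 where
  V : Type
  [addV : AddCommGroup V]
  [modV : Module k V]
  T : Type
  [addT : AddCommGroup T]
  [modT : Module (Polynomial k) T]
  torsion : ∀ x : T, ∃ n : ℕ, (Polynomial.X : Polynomial k) ^ n • x = 0
  q : (TensorProduct k (LocX k) V) →ₗ[Polynomial k] T

attribute [instance] SObj.addV SObj.modV SObj.addT SObj.modT

variable {k}

/-- `t ⊗ φ`, as a `k[c]`-linear map. -/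
def tmap {V W : Type} [AddCommGroup V] [Module k V] [AddCommGroup W] [Module k W]
    (φ : V →ₗ[k] W) :
    (TensorProduct k (LocX k) V) →ₗ[Polynomial k] (TensorProduct k (LocX k) W) :=
  TensorProduct.AlgebraTensorModule.map
    (LinearMap.id : LocX k →ₗ[Polynomial k] LocX k) φ

/-- A morphism in the semifree torsion category: a pair of a `k`-linear map and a
`k[c]`-linear map commuting with the structure maps. -/
@[ext]
structure SHom (X Y : SObj k) : Type where
  φ : X.V →ₗ[k] Y.V
  ψ : X.T →ₗ[Polynomial k] Y.T
  comm : ψ ∘ₗ X.q = Y.q ∘ₗ tmap φ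

lemma tmap_id {V : Type} [AddCommGroup V] [Module k V] :
    tmap (LinearMap.id : V →ₗ[k] V) = LinearMap.id := by
  ext x
  simp [tmap]

lemma tmap_comp {V W U : Type} [AddCommGroup V] [Module k V] [AddCommGroup W] [Module k W]
    [AddCommGroup U] [Module k U] (φ₁ : V →ₗ[k] W) (φ₂ : W →ₗ[k] U) :
    tmap (φ₂ ∘ₗ φ₁) = tmap φ₂ ∘ₗ tmap (k := k) φ₁ := by
  ext x
  simp [tmap]

instance : Category (SObj k) where
  Hom X Y := SHom X Y
  id X :=
    { φ := LinearMap.id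
      ψ := LinearMap.id
      comm := by rw [tmap_id]; simp }
  comp {X Y Z} f g :=
    { φ := g.φ ∘ₗ f.φ
      ψ := g.ψ ∘ₗ f.ψ
      comm := by
        rw [tmap_comp, LinearMap.comp_assoc, f.comm, ← LinearMap.comp_assoc, g.comm,
          LinearMap.comp_assoc] }
  id_comp f := by apply SHom.ext <;> simp
  comp_id f := by apply SHom.ext <;> simp
  assoc f g h := by apply SHom.ext <;> simp [LinearMap.comp_assoc]

/-- The object `f_G(V) = (V, 0, 0)`. -/
def fG (V : Type) [AddCommGroup V] [Module k V] : SObj k where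
  V := V
  T := PUnit
  torsion _ := ⟨0, Subsingleton.elim _ _⟩
  q := 0

/-- The object `f_1(T) = (0, T, 0)`. -/
def f1 (T : Type) [AddCommGroup T] [Module (Polynomial k) T]
    (tor : ∀ x : T, ∃ n : ℕ, (Polynomial.X : Polynomial k) ^ n • x = 0) : SObj k where
  V := PUnit
  T := T
  torsion := tor
  q := 0

section a1

variable (T : Type) [AddCommGroup T] [Module (Polynomial k) T]

/-- `T^t = Hom_{k[c]}(t, T)` regarded as a `k`-vector space (with `a • f = C a • f`). -/
abbrev a1V : Type := LocX k →ₗ[Polynomial k] T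

noncomputable instance : Module k (a1V (k := k) T) :=
  Module.compHom (LocX k →ₗ[Polynomial k] T) (algebraMap k (Polynomial k))

/-- The evaluation map `t ⊗_k T^t → T`, `x ⊗ f ↦ f x`, as a `k[c]`-linear map. -/
def a1q : (TensorProduct k (LocX k) (a1V (k := k) T)) →ₗ[Polynomial k] T := by
  letI : Module k T := Module.compHom T (algebraMap k (Polynomial k))
  let β : LocX k →ₗ[k] (a1V (k := k) T) →ₗ[k] T :=
    LinearMap.mk₂ k (fun x (g : a1V (k := k) T) => g x)
      (fun x y g => map_add _ x y)
      (fun a x g => by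
        show g (a • x) = a • g x
        rw [← algebraMap_smul (Polynomial k) a x, map_smul]
        rfl)
      (fun x g h => rfl)
      (fun a x g => rfl)
  refine { toFun := TensorProduct.lift β, map_add' := map_add _, map_smul' := ?_ }
  intro r z
  induction z using TensorProduct.induction_on with
  | zero => simp
  | tmul x g =>
    rw [TensorProduct.smul_tmul']
    simp only [RingHom.id_apply, TensorProduct.lift.tmul, LinearMap.mk₂_apply, β]
    exact map_smul _ r x
  | add z w hz hw =>
    try simp only [LinearMap.coe_mk, AddHom.coe_mk] at hz hw ⊢
    rw [smul_add, map_add, hz, hw, map_add, smul_add]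

/-- The object `a_1(T) = (T^t, T, ev)`. -/
def a1 (tor : ∀ x : T, ∃ n : ℕ, (Polynomial.X : Polynomial k) ^ n • x = 0) : SObj k where
  V := a1V (k := k) T
  T := T
  torsion := tor
  q := a1q T

end a1

end

/-!
Compatibility with `ev` forces the `V`-component of a morphism `θ : X ⟶ a_1(T')`: `θ.φ v` must be
`x ↦ θ.ψ (q (x ⊗ v))`, and for any `k[c]`-linear `ψ : T → T'` this formula does define a morphism.
For injectivity of `a_1(I)`, the `T`-component of a monomorphism `f : X ⟶ Y` is injective (test `f`
against the inclusion of `f_1(ker f.ψ)` and zero); so `g.ψ` extends along `f.ψ` to `Y.T → I` by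
injectivity of `I`, and the extension comes from a morphism `Y ⟶ a_1(I)`.
-/

noncomputable section

variable {k : Type} [Field k]

lemma TensorProduct.linearMap_ext {R A M N P : Type*} [CommSemiring R] [Semiring A]
    [AddCommMonoid M] [Module R M] [Module A M] [SMulCommClass R A M] [AddCommMonoid N]
    [Module R N] [AddCommMonoid P] [Module A P] {g h : M ⊗[R] N →ₗ[A] P}
    (H : ∀ x y, g (x ⊗ₜ y) = h (x ⊗ₜ y)) : g = h :=
  LinearMap.ext fun z => TensorProduct.induction_on z (by simp only [map_zero]) H
    fun _ _ h₁ h₂ => by rw [map_add, map_add, h₁, h₂]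

lemma tmap_zero {V W : Type} [AddCommGroup V] [Module k V] [AddCommGroup W] [Module k W] :
    tmap (0 : V →ₗ[k] W) = 0 := by
  ext x
  simp [tmap]

section a1

variable {T : Type} [AddCommGroup T] [Module (Polynomial k) T]
  (tor : ∀ x : T, ∃ n : ℕ, (Polynomial.X : Polynomial k) ^ n • x = 0)

lemma SHom.φ_to_a1_apply {X : SObj k} (θ : SHom X (a1 T tor)) (v : X.V) (x : LocX k) :
    (show a1V (k := k) T from θ.φ v) x = θ.ψ (X.q (x ⊗ₜ v)) :=
  (LinearMap.congr_fun θ.comm (x ⊗ₜ v)).symm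

lemma SHom.ext_to_a1 {X : SObj k} {θ₁ θ₂ : SHom X (a1 T tor)} (h : θ₁.ψ = θ₂.ψ) :
    θ₁ = θ₂ := by
  refine SHom.ext (LinearMap.ext fun v => LinearMap.ext fun x => ?_) h
  rw [θ₁.φ_to_a1_apply, θ₂.φ_to_a1_apply, h]

def toA1V (X : SObj k) (ψ : X.T →ₗ[Polynomial k] T) : X.V →ₗ[k] a1V (k := k) T where
  toFun v := ψ ∘ₗ X.q ∘ₗ (AlgebraTensorModule.mk k (Polynomial k) (LocX k) X.V).flip v
  map_add' v w := by
    ext x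
    simp
  map_smul' a v := by
    ext x
    change ψ (X.q (x ⊗ₜ (a • v))) = algebraMap k (Polynomial k) a • ψ (X.q (x ⊗ₜ v))
    rw [← map_smul ψ, ← map_smul X.q, smul_tmul', algebraMap_smul, smul_tmul]

def toA1 (X : SObj k) (ψ : X.T →ₗ[Polynomial k] T) : SHom X (a1 T tor) where
  φ := toA1V X ψ
  ψ := ψ
  comm := TensorProduct.linearMap_ext fun _ _ => rfl

lemma SHom.bijective_ψ_to_a1 (X : SObj k) :
    Function.Bijective (fun θ : SHom X (a1 T tor) => θ.ψ) :=
  ⟨fun _ _ => SHom.ext_to_a1 tor, fun ψ => ⟨toA1 tor X ψ, rfl⟩⟩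

end a1

instance {X Y : SObj k} : Zero (X ⟶ Y) :=
  ⟨⟨0, 0, by simp [tmap_zero]⟩⟩

def f1Subtype (X : SObj k) (K : Submodule (Polynomial k) X.T) :
    f1 K (fun y => (X.torsion y).imp fun _ hn => Subtype.ext hn) ⟶ X where
  φ := 0
  ψ := K.subtype
  comm := by rw [tmap_zero, LinearMap.comp_zero]; exact LinearMap.comp_zero _

lemma SHom.ψ_injective_of_mono {X Y : SObj k} (f : X ⟶ Y) [Mono f] :
    Function.Injective f.ψ := by
  have h : f1Subtype X (LinearMap.ker f.ψ) = 0 :=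
    (cancel_mono f).mp (SHom.ext rfl (LinearMap.ext fun y => y.2.trans (map_zero f.ψ).symm))
  rw [← LinearMap.ker_eq_bot, LinearMap.ker_eq_bot']
  exact fun x hx => LinearMap.congr_fun (congrArg SHom.ψ h) ⟨x, hx⟩

theorem injective_a1 {I : Type} [AddCommGroup I] [Module (Polynomial k) I]
    (tor : ∀ x : I, ∃ n : ℕ, (Polynomial.X : Polynomial k) ^ n • x = 0)
    [Module.Injective (Polynomial k) I] : Injective (a1 I tor) := by
  constructor
  intro X Y g f _
  obtain ⟨ψ, hψ⟩ := ‹Module.Injective (Polynomial k) I›.out f.ψ f.ψ_injective_of_mono g.ψ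
  exact ⟨toA1 tor Y ψ, SHom.ext_to_a1 tor (LinearMap.ext hψ)⟩

end

/-- `a_1` is right adjoint to evaluation `(V,T,q) ↦ T`: for every object `X`
and torsion module `T′`, the natural map `Hom_A(X, a_1(T′)) → Hom_R(T, T′)`, `θ ↦ ψ_θ`, is
bijective. Consequently `a_1(I)` is injective in `A` whenever `I` is an injective torsion
`R`-module. -/
theorem stmt2 (k : Type) [Field k] :
    (∀ (X : SObj k) (T' : Type) [AddCommGroup T'] [Module (Polynomial k) T']
      (tor : ∀ x : T', ∃ n : ℕ, (Polynomial.X : Polynomial k) ^ n • x = 0),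
      Function.Bijective (fun θ : SHom X (a1 T' tor) => θ.ψ)) ∧
    ∀ (I : Type) [AddCommGroup I] [Module (Polynomial k) I]
      (tor : ∀ x : I, ∃ n : ℕ, (Polynomial.X : Polynomial k) ^ n • x = 0),
      Module.Injective (Polynomial k) I → Injective (a1 I tor) :=
  ⟨fun X _ _ _ tor => SHom.bijective_ψ_to_a1 tor X, fun _ _ _ tor _ => injective_a1 tor⟩
end

section
/- Let R be a commutative ring, I an ideal of R, and M an R-module that is I-power torsion (for every m ∈ M there is n with Iⁿ·m = 0). If u ∈ R acts bijectively on M (multiplication by u is a bijection M → M) and x ∈ I, then u + x acts bijectively on M. -/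
/-- Let `R` be a commutative ring, `I` an ideal, and `M` an `I`-power-torsion
`R`-module. If `u` acts bijectively on `M` and `x ∈ I`, then `u + x` acts bijectively on `M`. -/
theorem stmt11 (R : Type) [CommRing R] (I : Ideal R)
    (M : Type) [AddCommGroup M] [Module R M]
    (htor : ∀ m : M, ∃ n : ℕ, ∀ r ∈ I ^ n, r • m = 0)
    (u : R) (hu : Function.Bijective fun m : M => u • m)
    (x : R) (hx : x ∈ I) :
    Function.Bijective fun m : M => (u + x) • m := by
  -- `e` : multiplication by `u` as a linear equivalence
  let e : M ≃ₗ[R] M := LinearEquiv.ofBijective (LinearMap.lsmul R M u) hu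
  -- `f = u⁻¹ ∘ (x • ·)`
  let f : M →ₗ[R] M := e.symm.toLinearMap ∘ₗ LinearMap.lsmul R M x
  have he : ∀ m : M, e m = u • m := fun m => rfl
  have hf : ∀ m : M, e (f m) = x • m := fun m => e.apply_symm_apply _
  -- key fact: `x^n • m = 0 → x^n • f m = 0` after shifting; precisely:
  have hshift : ∀ (n : ℕ) (m : M), x ^ (n + 1) • m = 0 → x ^ n • f m = 0 := by
    intro n m hm
    have : e (x ^ n • f m) = 0 := by
      rw [map_smul, hf, smul_smul, ← pow_succ, hm]
    have h0 : e (x ^ n • f m) = e 0 := by simpa using this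
    exact e.injective h0
  -- injectivity of `1 + f`
  have hinj : ∀ (n : ℕ) (m : M), x ^ n • m = 0 → m + f m = 0 → m = 0 := by
    intro n
    induction n with
    | zero => intro m hm _; simpa using hm
    | succ n ih =>
      intro m hm h0
      have hfm : f m + f (f m) = 0 := by
        have := congrArg f h0
        simpa [map_add] using this
      have : f m = 0 := ih (f m) (hshift n m hm) hfm
      have := h0
      rw [‹f m = 0›, add_zero] at this
      exact this
  -- surjectivity of `1 + f`
  have hsurj : ∀ (n : ℕ) (y : M), x ^ n • y = 0 → ∃ m, m + f m = y := by
    intro n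
    induction n with
    | zero => intro y hy; exact ⟨0, by simpa using hy.symm⟩
    | succ n ih =>
      intro y hy
      obtain ⟨m', hm'⟩ := ih (f y) (hshift n y hy)
      exact ⟨y - m', by rw [map_sub, ← hm']; abel⟩
  -- torsion gives powers of x annihilating
  have hxpow : ∀ m : M, ∃ n : ℕ, x ^ n • m = 0 := by
    intro m
    obtain ⟨n, hn⟩ := htor m
    exact ⟨n, hn _ (Ideal.pow_mem_pow hx n)⟩
  -- factorization: (u + x) • m = e (m + f m)
  have hfact : ∀ m : M, (u + x) • m = e (m + f m) := by
    intro m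
    rw [map_add, he, hf, add_smul]
  constructor
  · intro a b hab
    simp only at hab
    rw [hfact, hfact] at hab
    have h1 : a + f a = b + f b := e.injective hab
    have h2 : (a - b) + f (a - b) = 0 := by
      rw [map_sub, sub_add_sub_comm, h1, sub_self]
    obtain ⟨n, hn⟩ := hxpow (a - b)
    have := hinj n (a - b) hn h2
    exact sub_eq_zero.mp this
  · intro y
    obtain ⟨n, hn⟩ := hxpow (e.symm y)
    obtain ⟨m, hm⟩ := hsurj n (e.symm y) hn
    exact ⟨m, by simp only; rw [hfact, hm, e.apply_symm_apply]⟩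
end

section
/- Let k be a field and P = k[x₁,…,x_s, y₁,…,y_t]. Let E ⊆ P be the multiplicative set generated by all linear forms ℓ = Σᵢ λᵢ xᵢ + Σⱼ μⱼ yⱼ with (μ₁,…,μ_t) ≠ (0,…,0), and let E′ ⊆ E be the multiplicative set generated by the nonzero linear forms in the y-variables alone. Then for every P-module M that is (x₁,…,x_s)-power torsion, the natural localization map E′⁻¹M → E⁻¹M is an isomorphism; equivalently, every element of E acts bijectively on E′⁻¹M. -/
noncomputable section

open MvPolynomial

variable (k : Type) [Field k] (s t : ℕ)

/-- The polynomial ring `P = k[x₁,…,x_s, y₁,…,y_t]`. -/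
abbrev PolyST : Type := MvPolynomial (Fin s ⊕ Fin t) k

/-- The set of linear forms `Σ λᵢ xᵢ + Σ μⱼ yⱼ` with `μ ≠ 0`. -/
def linearFormsY : Set (PolyST k s t) :=
  {p | ∃ (lam : Fin s → k) (mu : Fin t → k), mu ≠ 0 ∧
    p = (∑ i, MvPolynomial.C (lam i) * MvPolynomial.X (Sum.inl i)) +
        (∑ j, MvPolynomial.C (mu j) * MvPolynomial.X (Sum.inr j))}

/-- The set of nonzero linear forms in the `y`-variables alone. -/
def linearFormsOnlyY : Set (PolyST k s t) :=
  {p | ∃ mu : Fin t → k, mu ≠ 0 ∧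
    p = ∑ j, MvPolynomial.C (mu j) * MvPolynomial.X (Sum.inr j)}

/-- The multiplicative set `E` generated by the linear forms involving the `y`-variables. -/
def Emul : Submonoid (PolyST k s t) := Submonoid.closure (linearFormsY k s t)

/-- The multiplicative set `E′ ⊆ E` generated by the nonzero linear forms
in the `y`-variables alone. -/
def Emul' : Submonoid (PolyST k s t) := Submonoid.closure (linearFormsOnlyY k s t)

/-- The ideal `(x₁,…,x_s)` of `P`. -/
def xIdeal : Ideal (PolyST k s t) :=
  Ideal.span (Set.range fun i : Fin s => (MvPolynomial.X (Sum.inl i) : PolyST k s t))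

end

/-- If `q` acts bijectively on `N` and `p` acts locally nilpotently, then `p + q`
acts bijectively on `N`. -/
theorem aux_bij {R : Type} [CommRing R] {N : Type} [AddCommGroup N] [Module R N]
    (p q : R) (htor : ∀ z : N, ∃ n : ℕ, p ^ n • z = 0)
    (hq : Function.Bijective fun z : N => q • z) :
    Function.Bijective fun z : N => (p + q) • z := by
  have hqu : IsUnit (algebraMap R (Module.End R N) q) := by
    rw [Module.End.isUnit_iff]
    exact hq
  have hqninj : ∀ n : ℕ, Function.Injective fun z : N => q ^ n • z := by
    intro n
    have h1 : IsUnit (algebraMap R (Module.End R N) (q ^ n)) := by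
      rw [map_pow]; exact hqu.pow n
    have hb := (Module.End.isUnit_iff _).1 h1
    intro a b hab
    apply hb.1
    simp only [Module.algebraMap_end_apply]
    exact hab
  constructor
  · intro z₁ z₂ h
    simp only at h
    rw [← sub_eq_zero]
    set z := z₁ - z₂ with hz
    have hz0 : (p + q) • z = 0 := by rw [hz, smul_sub, h, sub_self]
    obtain ⟨n, hn⟩ := htor z
    have hqz : q • z = (-p) • z := by
      rw [add_smul] at hz0
      rw [neg_smul, eq_neg_iff_add_eq_zero, add_comm]
      exact hz0
    have key : ∀ i : ℕ, q ^ i • z = (-p) ^ i • z := by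
      intro i
      induction i with
      | zero => simp
      | succ i ih =>
        rw [pow_succ, mul_smul, hqz, smul_comm, ih, smul_comm, ← mul_smul, ← pow_succ]
    have hqn : q ^ n • z = 0 := by
      rw [key n, neg_pow, mul_smul, hn, smul_zero]
    have := hqninj n (a₁ := z) (a₂ := 0) (by simpa using hqn)
    exact this
  · intro y
    obtain ⟨n, hn⟩ := htor y
    set U := hqu.unit with hU
    set V : Module.End R N := ↑U⁻¹ with hV
    have hUV : ∀ x : N, q • V x = x := by
      intro x
      have h1 : ((U : Module.End R N) * V) x = x := by rw [U.mul_inv]; rfl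
      have h2 : (U : Module.End R N) (V x) = q • V x := by
        rw [hU, IsUnit.unit_spec, Module.algebraMap_end_apply]
      rw [← h2]
      exact h1
    refine ⟨∑ i ∈ Finset.range n, (-p) ^ i • (V ^ (i + 1)) y, ?_⟩
    simp only
    rw [Finset.smul_sum]
    have hsummand : ∀ i, (p + q) • ((-p) ^ i • (V ^ (i + 1)) y) =
        (fun i => (-p) ^ i • (V ^ i) y) i - (fun i => (-p) ^ i • (V ^ i) y) (i + 1) := by
      intro i
      simp only
      rw [add_smul]
      have hqterm : q • ((-p) ^ i • (V ^ (i + 1)) y) = (-p) ^ i • (V ^ i) y := by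
        rw [smul_comm]
        congr 1
        have : (V ^ (i + 1)) y = V ((V ^ i) y) := by
          rw [pow_succ']; rfl
        rw [this, hUV]
      have hpterm : p • ((-p) ^ i • (V ^ (i + 1)) y) =
          -((-p) ^ (i + 1) • (V ^ (i + 1)) y) := by
        rw [← mul_smul, ← neg_smul]
        congr 1
        rw [pow_succ']
        ring
      rw [hqterm, hpterm]
      abel
    rw [Finset.sum_congr rfl fun i _ => hsummand i, Finset.sum_range_sub']
    have hfn : (-p) ^ n • (V ^ n) y = 0 := by
      have h0 : p ^ n • (V ^ n) y = 0 := by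
        rw [← map_smul, hn, map_zero]
      rw [neg_pow, mul_smul, h0, smul_zero]
    simp [hfn]

/-- for a `(x₁,…,x_s)`-power-torsion module `M` over
`P = k[x₁,…,x_s,y₁,…,y_t]`, the natural localization map `E′⁻¹M → E⁻¹M` is an isomorphism;
equivalently `E′⁻¹M`, with its map from `M`, is already a localization of `M` at `E`, and
every element of `E` acts bijectively on `E′⁻¹M`. -/
theorem stmt12 (k : Type) [Field k] (s t : ℕ)
    (M : Type) [AddCommGroup M] [Module (PolyST k s t) M]
    (htor : ∀ m : M, ∃ n : ℕ, ∀ r ∈ (xIdeal k s t) ^ n, r • m = 0) :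
    IsLocalizedModule (Emul k s t) (LocalizedModule.mkLinearMap (Emul' k s t) M) ∧
    ∀ e ∈ Emul k s t,
      Function.Bijective fun z : LocalizedModule (Emul' k s t) M => e • z := by
  set R := PolyST k s t
  set N := LocalizedModule (Emul' k s t) M with hN
  -- E' ≤ E
  have hE'E : Emul' k s t ≤ Emul k s t := by
    apply Submonoid.closure_mono
    rintro p ⟨mu, hmu, hp⟩
    exact ⟨0, mu, hmu, by simp [hp]⟩
  -- torsion of N
  have hNtor : ∀ z : N, ∃ n : ℕ, ∀ r ∈ (xIdeal k s t) ^ n, r • z = 0 := by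
    intro z
    induction z using LocalizedModule.induction_on with
    | h m e =>
      obtain ⟨n, hn⟩ := htor m
      refine ⟨n, fun r hr => ?_⟩
      rw [LocalizedModule.smul'_mk, hn r hr, LocalizedModule.zero_mk]
  -- bijectivity for all elements of E
  have hbij : ∀ e ∈ Emul k s t, Function.Bijective fun z : N => e • z := by
    intro e he
    induction he using Submonoid.closure_induction with
    | mem x hx =>
      obtain ⟨lam, mu, hmu, rfl⟩ := hx
      set p : R := ∑ i, MvPolynomial.C (lam i) * MvPolynomial.X (Sum.inl i) with hp
      set q : R := ∑ j, MvPolynomial.C (mu j) * MvPolynomial.X (Sum.inr j) with hq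
      have hpI : p ∈ xIdeal k s t := by
        apply Ideal.sum_mem
        intro i _
        exact Ideal.mul_mem_left _ _ (Ideal.subset_span ⟨i, rfl⟩)
      have hqE' : q ∈ Emul' k s t := Submonoid.subset_closure ⟨mu, hmu, rfl⟩
      have hqbij : Function.Bijective fun z : N => q • z := by
        have := IsLocalizedModule.map_units (LocalizedModule.mkLinearMap (Emul' k s t) M)
          ⟨q, hqE'⟩
        rw [Module.End.isUnit_iff] at this
        exact this
      apply aux_bij
      · intro z
        obtain ⟨n, hn⟩ := hNtor z
        exact ⟨n, hn _ (Ideal.pow_mem_pow hpI n)⟩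
      · exact hqbij
    | one =>
      simp only [one_smul]
      exact Function.bijective_id
    | mul x y hx hy ihx ihy =>
      have hcomp : (fun z : N => (x * y) • z) = (fun z : N => x • z) ∘ fun z : N => y • z := by
        funext z
        simp [mul_smul]
      rw [hcomp]
      exact ihx.comp ihy
  refine ⟨⟨fun x => ?_, fun y => ?_, fun {x₁ x₂} h => ?_⟩, hbij⟩
  · rw [Module.End.isUnit_iff]
    exact hbij x x.2
  · induction y using LocalizedModule.induction_on with
    | h m e =>
      refine ⟨⟨m, ⟨(e : R), hE'E e.2⟩⟩, ?_⟩
      show (e : R) • LocalizedModule.mk m e = _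
      rw [LocalizedModule.smul'_mk]
      show LocalizedModule.mk (e • m) e = _
      rw [LocalizedModule.mk_cancel]
      rfl
  · obtain ⟨c, hc⟩ := IsLocalizedModule.exists_of_eq
      (S := Emul' k s t) (f := LocalizedModule.mkLinearMap (Emul' k s t) M) h
    exact ⟨⟨(c : R), hE'E c.2⟩, hc⟩
end

section
/- Let k be a field, R = k[X], L = R[1/X], and let D be the X-power-torsion submodule of the k-linear dual Hom_k(R, k). Then the canonical map ⨁_{n∈ℕ} Hom_R(L, D) → Hom_R(L, ⨁_{n∈ℕ} D) is not surjective. -/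
/-!
Identify `L` with the Laurent polynomials `k[T;T⁻¹]` and let `ψₙ : L → D` send `f` to the
functional `p ↦ coefficient of T^(-n-1) in f p`. It is `X`-power torsion because it kills
`k[X]`, and each `ψₙ` is nonzero since `ψₙ (T^(-n-1)) 1 = 1`. A fixed `f` has bounded-below
support, so `ψₙ f = 0` for large `n` and the `ψₙ` assemble to a map `L → ⨁ₙ D`. Its components
are the `ψₙ`, infinitely many of them nonzero, whereas any map in the image of
`⨁ₙ Hom(L, D)` has only finitely many nonzero components.
-/

section KDual

variable (k : Type) [CommSemiring k] (A : Type) [CommSemiring A] [Algebra k A]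

/-- The `k`-linear dual `Hom_k(A, k)` of a commutative `k`-algebra `A`, regarded as an
`A`-module via `(a • f) b = f (a * b)`. -/
def KDual : Type := A →ₗ[k] k

instance : AddCommMonoid (KDual k A) :=
  inferInstanceAs (AddCommMonoid (A →ₗ[k] k))

instance : Module A (KDual k A) where
  smul a f := (f : A →ₗ[k] k).comp (LinearMap.mulLeft k a)
  one_smul f := by
    show (f : A →ₗ[k] k).comp (LinearMap.mulLeft k 1) = f
    ext b; show DFunLike.coe (F := A →ₗ[k] k) f (1 * b) = DFunLike.coe (F := A →ₗ[k] k) f b; rw [one_mul]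
  mul_smul a b f := by
    show (f : A →ₗ[k] k).comp (LinearMap.mulLeft k (a * b)) =
      ((f : A →ₗ[k] k).comp (LinearMap.mulLeft k b)).comp (LinearMap.mulLeft k a)
    ext c
    show DFunLike.coe (F := A →ₗ[k] k) f (a * b * c) = DFunLike.coe (F := A →ₗ[k] k) f (b * (a * c))
    rw [mul_left_comm, mul_assoc]
  smul_zero a := by
    show (0 : A →ₗ[k] k).comp (LinearMap.mulLeft k a) = 0
    ext b; simp
  smul_add a f g := by
    show ((f + g : A →ₗ[k] k)).comp (LinearMap.mulLeft k a) =
      (f : A →ₗ[k] k).comp (LinearMap.mulLeft k a) + (g : A →ₗ[k] k).comp (LinearMap.mulLeft k a)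
    ext b; rfl
  add_smul a b f := by
    show (f : A →ₗ[k] k).comp (LinearMap.mulLeft k (a + b)) =
      (f : A →ₗ[k] k).comp (LinearMap.mulLeft k a) + (f : A →ₗ[k] k).comp (LinearMap.mulLeft k b)
    ext c
    show DFunLike.coe (F := A →ₗ[k] k) f ((a + b) * c) = DFunLike.coe (F := A →ₗ[k] k) f (a * c) + DFunLike.coe (F := A →ₗ[k] k) f (b * c)
    rw [add_mul]; exact LinearMap.map_add (f : A →ₗ[k] k) _ _
  zero_smul f := by
    show (f : A →ₗ[k] k).comp (LinearMap.mulLeft k 0) = 0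
    ext b
    show DFunLike.coe (F := A →ₗ[k] k) f (0 * b) = 0
    rw [zero_mul]; exact LinearMap.map_zero (f : A →ₗ[k] k)

end KDual

section PowerTorsion

variable (R : Type) [CommRing R] (r : R) (M : Type) [AddCommMonoid M] [Module R M]

/-- The submodule of elements annihilated by some power of `r`. -/
def powerTorsion : Submodule R M where
  carrier := {x | ∃ n : ℕ, r ^ n • x = 0}
  zero_mem' := ⟨0, smul_zero _⟩
  add_mem' := by
    rintro x y ⟨n, hn⟩ ⟨m, hm⟩
    refine ⟨n + m, ?_⟩
    have hx : r ^ (n + m) • x = 0 := by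
      rw [pow_add, mul_comm, mul_smul, hn, smul_zero]
    have hy : r ^ (n + m) • y = 0 := by
      rw [pow_add, mul_smul, hm, smul_zero]
    rw [smul_add, hx, hy, add_zero]
  smul_mem' := by
    rintro c x ⟨n, hn⟩
    exact ⟨n, by rw [smul_smul, mul_comm, ← smul_smul, hn, smul_zero]⟩

end PowerTorsion

open Polynomial LaurentPolynomial

namespace DirectSum

variable {R ι M : Type*} [CommSemiring R] {N : ι → Type*}
  [AddCommMonoid M] [Module R M] [∀ i, AddCommMonoid (N i)] [∀ i, Module R (N i)]

theorem toModule_llcomp_lof_apply [DecidableEq ι] (c : ⨁ i, M →ₗ[R] N i) (x : M) (i : ι) :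
    toModule R ι (M →ₗ[R] ⨁ i, N i)
      (fun j => LinearMap.llcomp (σ₁₂ := RingHom.id R) R M (N j) _ (lof R ι N j)) c x i =
      c i x := by
  induction c using DirectSum.induction_on with
  | zero => simp
  | of j f =>
    rw [← lof_eq_of R, toModule_lof]
    simp only [LinearMap.llcomp_apply]
    by_cases h : j = i
    · subst h; simp only [lof_apply]
    · simp [lof_eq_of, of_eq_of_ne _ _ _ (Ne.symm h)]
  | add c d hc hd => simp only [map_add, LinearMap.add_apply, add_apply, hc, hd]

noncomputable def linearMapOfFinite (ψ : ∀ i, M →ₗ[R] N i) (hψ : ∀ x, {i | ψ i x ≠ 0}.Finite) :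
    M →ₗ[R] ⨁ i, N i where
  toFun x := ⟨fun i => ψ i x, Trunc.mk ⟨(hψ x).toFinset.val, fun i => by
    by_cases h : ψ i x = 0
    · exact .inr h
    · exact .inl ((hψ x).mem_toFinset.2 h)⟩⟩
  map_add' x y := DFinsupp.ext fun i => map_add (ψ i) x y
  map_smul' r x := DFinsupp.ext fun i => map_smul (ψ i) r x

@[simp]
theorem linearMapOfFinite_apply (ψ : ∀ i, M →ₗ[R] N i) (hψ : ∀ x, {i | ψ i x ≠ 0}.Finite)
    (x : M) (i : ι) : linearMapOfFinite ψ hψ x i = ψ i x := rfl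

theorem not_surjective_toModule_llcomp_lof [DecidableEq ι] (ψ : ∀ i, M →ₗ[R] N i)
    (hψ : ∀ x, {i | ψ i x ≠ 0}.Finite) (hinf : {i | ψ i ≠ 0}.Infinite) :
    ¬ Function.Surjective (toModule R ι (M →ₗ[R] ⨁ i, N i)
      fun j => LinearMap.llcomp (σ₁₂ := RingHom.id R) R M (N j) _ (lof R ι N j)) := by
  classical
  intro hsurj
  obtain ⟨c, hc⟩ := hsurj (linearMapOfFinite ψ hψ)
  have hcψ : ∀ i, c i = ψ i := fun i => LinearMap.ext fun x => by
    rw [← toModule_llcomp_lof_apply, hc, linearMapOfFinite_apply]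
  refine hinf (c.support.finite_toSet.subset fun i hi => ?_)
  simpa [hcψ] using hi

end DirectSum

instance LaurentPolynomial.isScalarTower_polynomial (R : Type*) [CommSemiring R] :
    IsScalarTower R R[X] R[T;T⁻¹] :=
  IsScalarTower.of_algebraMap_eq fun r => (Polynomial.toLaurent_C r).symm

namespace KDual

variable {k A : Type} [CommSemiring k] [CommSemiring A] [Algebra k A]

instance : FunLike (KDual k A) A k := inferInstanceAs (FunLike (A →ₗ[k] k) A k)

@[ext]
theorem ext {f g : KDual k A} (h : ∀ a, f a = g a) : f = g :=
  LinearMap.ext h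

@[simp]
theorem zero_apply (a : A) : (0 : KDual k A) a = 0 := rfl

@[simp]
theorem smul_apply (r : A) (f : KDual k A) (a : A) : (r • f) a = f (r * a) := rfl

variable {B : Type} [CommSemiring B] [Algebra A B] [Algebra k B] [IsScalarTower k A B]

noncomputable def ofFunctional (c : B →ₗ[k] k) : B →ₗ[A] KDual k A where
  toFun b := c ∘ₗ LinearMap.mulLeft k b ∘ₗ (IsScalarTower.toAlgHom k A B).toLinearMap
  map_add' b b' := LinearMap.ext fun a => by
    show c ((b + b') * algebraMap A B a) = c (b * algebraMap A B a) + c (b' * algebraMap A B a)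
    rw [add_mul, map_add]
  map_smul' r b := LinearMap.ext fun a => by
    show c (r • b * algebraMap A B a) = c (b * algebraMap A B (r * a))
    rw [Algebra.smul_def, map_mul (algebraMap A B)]
    ring_nf

theorem ofFunctional_apply (c : B →ₗ[k] k) (b : B) (a : A) :
    ofFunctional c b a = c (b * algebraMap A B a) := rfl

end KDual

theorem KDual.ofFunctional_mem_powerTorsion {k A B : Type} [CommSemiring k] [CommRing A]
    [Algebra k A] [CommSemiring B] [Algebra A B] [Algebra k B] [IsScalarTower k A B]
    (r : A) [IsLocalization.Away r B] (c : B →ₗ[k] k) (hc : ∀ a, c (algebraMap A B a) = 0)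
    (b : B) : ofFunctional c b ∈ powerTorsion A r (KDual k A) := by
  obtain ⟨m, a, hb⟩ := IsLocalization.Away.surj r b
  refine ⟨m, ?_⟩
  ext a'
  rw [← map_smul, ofFunctional_apply, Algebra.smul_def, map_pow, mul_comm _ b, hb, ← map_mul, hc,
    zero_apply]

namespace LaurentPolynomial

theorem coeff_toLaurent_of_neg {R : Type*} [Semiring R] (p : R[X]) {n : ℤ} (hn : n < 0) :
    (toLaurent p).coeff n = 0 :=
  Finsupp.mapDomain_of_notMem_range _ _ (by rintro ⟨m, rfl⟩; exact hn.not_ge (Int.natCast_nonneg m))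

theorem exists_coeff_mul_toLaurent_eq_zero {R : Type*} [CommSemiring R] (f : R[T;T⁻¹]) :
    ∃ m : ℕ, ∀ (q : R[X]) (j : ℤ), j < -m → (f * toLaurent q).coeff j = 0 := by
  obtain ⟨m, f', hf'⟩ := exists_T_pow f
  refine ⟨m, fun q j hj => ?_⟩
  have : f * toLaurent q = toLaurent (f' * q) * T (-m) := by
    rw [map_mul, hf', mul_right_comm, mul_T_assoc, add_neg_cancel, T_zero, mul_one]
  rw [this, T, AddMonoidAlgebra.coeff_mul_single_apply, coeff_toLaurent_of_neg _ (by omega),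
    zero_mul]

variable (R : Type*) [CommSemiring R]

noncomputable def lcoeff (j : ℤ) : R[T;T⁻¹] →ₗ[R] R :=
  Finsupp.lapply j ∘ₗ (AddMonoidAlgebra.coeffLinearEquiv R).toLinearMap

@[simp]
theorem lcoeff_apply (j : ℤ) (f : R[T;T⁻¹]) : lcoeff R j f = f.coeff j := rfl

end LaurentPolynomial

section DualCoeff

variable (k : Type) [CommRing k]

noncomputable def dualCoeff (n : ℕ) :
    k[T;T⁻¹] →ₗ[k[X]] powerTorsion k[X] X (KDual k k[X]) :=
  (KDual.ofFunctional (lcoeff k (-n - 1))).codRestrict _ <|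
    KDual.ofFunctional_mem_powerTorsion X _ fun p => coeff_toLaurent_of_neg p (by omega)

theorem exists_dualCoeff_eq_zero (f : k[T;T⁻¹]) : ∃ m : ℕ, ∀ n, m ≤ n → dualCoeff k n f = 0 := by
  obtain ⟨m, hm⟩ := exists_coeff_mul_toLaurent_eq_zero f
  exact ⟨m, fun n hn => Subtype.ext <| KDual.ext fun q => hm q _ (by omega)⟩

theorem dualCoeff_T_ne_zero [Nontrivial k] (n : ℕ) : dualCoeff k n (T (-n - 1)) ≠ 0 := by
  intro h
  have := DFunLike.congr_fun (congrArg Subtype.val h) 1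
  simp [dualCoeff, KDual.ofFunctional_apply] at this

end DualCoeff

/-- for `R = k[X]`, `L = R[1/X]` and `D` the `X`-power-torsion submodule of
`Hom_k(R,k)`, the canonical map `⨁ₙ Hom_R(L, D) → Hom_R(L, ⨁ₙ D)` is not surjective. -/
theorem stmt16 (k : Type) [Field k] :
    ¬ Function.Surjective
        (DirectSum.toModule (Polynomial k) ℕ
          (Localization.Away (Polynomial.X : Polynomial k) →ₗ[Polynomial k]
            DirectSum ℕ fun _ : ℕ =>
              powerTorsion (Polynomial k) Polynomial.X (KDual k (Polynomial k)))
          (fun n =>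
            LinearMap.llcomp (σ₁₂ := RingHom.id (Polynomial k)) (Polynomial k)
              (Localization.Away (Polynomial.X : Polynomial k))
              (powerTorsion (Polynomial k) Polynomial.X (KDual k (Polynomial k)))
              (DirectSum ℕ fun _ : ℕ =>
                powerTorsion (Polynomial k) Polynomial.X (KDual k (Polynomial k)))
              (DirectSum.lof (Polynomial k) ℕ
                (fun _ : ℕ =>
                  powerTorsion (Polynomial k) Polynomial.X (KDual k (Polynomial k))) n))) := by
  let e := IsLocalization.algEquiv (Submonoid.powers (X : k[X])) (Localization.Away (X : k[X]))
    k[T;T⁻¹]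
  refine DirectSum.not_surjective_toModule_llcomp_lof (fun n => dualCoeff k n ∘ₗ e.toLinearMap)
    (fun ℓ => ?_) (Set.infinite_univ.mono fun n _ hn => ?_)
  · obtain ⟨m, hm⟩ := exists_dualCoeff_eq_zero k (e ℓ)
    exact (Set.finite_lt_nat m).subset fun n hn => not_le.1 fun h => hn (hm n h)
  · refine dualCoeff_T_ne_zero k n ?_
    simpa using DFunLike.congr_fun hn (e.symm (T (-n - 1)))
end
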